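/- Let a, c, r be integers with a ≥ c ≥ r ≥ 1. Then, in ℚ(q): X_r := (−1)^r q^{−cr+(r²+3r)/2} · ((1+q²)(1+q⁴)⋯(1+q^{2r})) / ((1−q²)^r [a][a−1]⋯[a−r+1]) lies in q^{r(a−c+1)} A₀, and Y_r := (−1)^r q^{−2cr+2r²+r} · ([2r−1][2r−3]⋯[3][1]) / ([2a][2a−2]⋯[2a−2r+2]) lies in q^{2r(a−c+1)} A₀. -/

import Mathlib

/-!
Since `[s] = q^(1-s) (1 - q^(2s)) / (1 - q²)` and `1 - q^(2s)` is a unit of `A₀` for `s ≥ 1`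
(its constant term is `1`), substituting into `X_r` and `Y_r` cancels the factors `1 - q²` and
leaves a power of `q` times an element of `A₀`. The exponent is an affine sum over `t < r`, and
Gauss's formula evaluates it to exactly `r(a-c+1)`, resp. `2r(a-c+1)`.
-/

namespace OSP

/-- The base field `ℚ(q)`. -/
abbrev K : Type := RatFunc ℚ

/-- The indeterminate `q`. -/
noncomputable def q : K := RatFunc.X

/-- The quantum integer `[s] = (q^s − q^{−s})/(q − q^{−1})`. -/
noncomputable def qn (z : K) (s : ℕ) : K := (z ^ s - z⁻¹ ^ s) / (z - z⁻¹)

/-- `A₀ ⊆ ℚ(q)`: the subring of rational functions regular at `q = 0`. -/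
def A0 : Set K :=
  {f | ∃ p r : Polynomial ℚ, r.coeff 0 ≠ 0 ∧
    f = algebraMap (Polynomial ℚ) K p / algebraMap (Polynomial ℚ) K r}

open Finset Polynomial

lemma zpow_sum₀ {G₀ ι : Type*} [CommGroupWithZero G₀] {z : G₀} (hz : z ≠ 0) (s : Finset ι)
    (f : ι → ℤ) : z ^ (∑ i ∈ s, f i) = ∏ i ∈ s, z ^ f i := by
  induction s using Finset.cons_induction with
  | empty => simp
  | cons i s hi ih => rw [sum_cons, prod_cons, zpow_add₀ hz, ih]

lemma sum_range_affine_mul_two (x y : ℤ) (n : ℕ) :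
    (∑ t ∈ range n, (x + y * t)) * 2 = n * (2 * x + y * (n - 1)) := by
  induction n with
  | zero => simp
  | succ n ih => rw [sum_range_succ, add_mul, ih]; push_cast; ring

def A0Subring : Subring K where
  carrier := A0
  mul_mem' := by
    rintro _ _ ⟨p₁, r₁, h₁, rfl⟩ ⟨p₂, r₂, h₂, rfl⟩
    exact ⟨p₁ * p₂, r₁ * r₂, by simpa [mul_coeff_zero] using ⟨h₁, h₂⟩,
      by rw [map_mul, map_mul, div_mul_div_comm]⟩
  one_mem' := ⟨1, 1, by simp, by simp⟩
  add_mem' := by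
    rintro _ _ ⟨p₁, r₁, h₁, rfl⟩ ⟨p₂, r₂, h₂, rfl⟩
    have hr (r : ℚ[X]) (hr : r.coeff 0 ≠ 0) : algebraMap ℚ[X] K r ≠ 0 :=
      RatFunc.algebraMap_ne_zero (by rintro rfl; simp at hr)
    exact ⟨p₁ * r₂ + r₁ * p₂, r₁ * r₂, by simpa [mul_coeff_zero] using ⟨h₁, h₂⟩,
      by rw [div_add_div _ _ (hr r₁ h₁) (hr r₂ h₂)]; simp⟩
  zero_mem' := ⟨0, 1, by simp, by simp⟩
  neg_mem' := by
    rintro _ ⟨p, r, h, rfl⟩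
    exact ⟨-p, r, h, by rw [map_neg, neg_div]⟩

lemma algebraMap_mem_A0Subring (p : ℚ[X]) : algebraMap ℚ[X] K p ∈ A0Subring :=
  ⟨p, 1, by simp, by simp⟩

lemma inv_algebraMap_mem_A0Subring {r : ℚ[X]} (hr : r.coeff 0 ≠ 0) :
    (algebraMap ℚ[X] K r)⁻¹ ∈ A0Subring :=
  ⟨1, r, hr, by simp⟩

lemma q_eq_algebraMap_X : q = algebraMap ℚ[X] K X := (RatFunc.algebraMap_X).symm

lemma one_add_q_pow_mem (n : ℕ) : 1 + q ^ n ∈ A0Subring := by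
  have h := algebraMap_mem_A0Subring (1 + X ^ n)
  rwa [map_add, map_one, map_pow, ← q_eq_algebraMap_X] at h

lemma one_sub_q_pow_eq (n : ℕ) : 1 - q ^ n = algebraMap ℚ[X] K (1 - X ^ n) := by
  simp [q_eq_algebraMap_X]

lemma coeff_zero_one_sub_X_pow {n : ℕ} (hn : n ≠ 0) : ((1 : ℚ[X]) - X ^ n).coeff 0 = 1 := by
  simp [coeff_X_pow, hn.symm]

lemma one_sub_q_pow_mem (n : ℕ) : 1 - q ^ n ∈ A0Subring :=
  one_sub_q_pow_eq n ▸ algebraMap_mem_A0Subring _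

lemma inv_one_sub_q_pow_mem {n : ℕ} (hn : n ≠ 0) : (1 - q ^ n)⁻¹ ∈ A0Subring := by
  rw [one_sub_q_pow_eq]
  exact inv_algebraMap_mem_A0Subring (by simp [coeff_zero_one_sub_X_pow hn])

lemma one_sub_q_pow_ne_zero {n : ℕ} (hn : n ≠ 0) : 1 - q ^ n ≠ 0 := by
  rw [one_sub_q_pow_eq]
  exact RatFunc.algebraMap_ne_zero fun h => by simpa [h] using coeff_zero_one_sub_X_pow hn

lemma q_ne_zero : q ≠ 0 := RatFunc.X_ne_zero

lemma one_sub_q_sq_ne_zero : (1 : K) - q ^ 2 ≠ 0 := one_sub_q_pow_ne_zero two_ne_zero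

lemma qn_eq {z : K} (hz : z ≠ 0) (hz2 : 1 - z ^ 2 ≠ 0) (s : ℕ) :
    qn z s = z ^ (1 - (s : ℤ)) * (1 - z ^ (2 * s)) / (1 - z ^ 2) := by
  have hzz : z - z⁻¹ ≠ 0 := by
    intro h
    apply hz2
    field_simp at h
    linear_combination -h
  rw [qn, zpow_sub₀ hz, zpow_one, zpow_natCast, div_eq_div_iff hzz hz2, inv_pow]
  field_simp
  ring

lemma prod_qn_eq {ι : Type*} {z : K} (hz : z ≠ 0) (hz2 : 1 - z ^ 2 ≠ 0) (s : Finset ι)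
    (g : ι → ℕ) :
    ∏ i ∈ s, qn z (g i) =
      z ^ (∑ i ∈ s, (1 - (g i : ℤ))) * (∏ i ∈ s, (1 - z ^ (2 * g i))) / (1 - z ^ 2) ^ #s := by
  simp only [qn_eq hz hz2, prod_div_distrib, prod_mul_distrib, prod_const, zpow_sum₀ hz]

noncomputable def Xr (a c r : ℕ) : K :=
  (-1 : K) ^ r * q ^ (-((c : ℤ) * r) + ((r : ℤ) ^ 2 + 3 * r) / 2) *
    (∏ t ∈ range r, (1 + q ^ (2 * (t + 1)))) /
    ((1 - q ^ 2) ^ r * ∏ t ∈ range r, qn q (a - t))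

noncomputable def Yr (a c r : ℕ) : K :=
  (-1 : K) ^ r * q ^ (-(2 * (c : ℤ) * r) + 2 * (r : ℤ) ^ 2 + r) *
    (∏ t ∈ range r, qn q (2 * t + 1)) / (∏ t ∈ range r, qn q (2 * (a - t)))

section

variable {a c r : ℕ}

lemma Xr_eq (hra : r ≤ a) (hca : c ≤ a) :
    Xr a c r = q ^ (r * (a - c + 1)) * ((-1) ^ r * (∏ t ∈ range r, (1 + q ^ (2 * (t + 1)))) *
      ∏ t ∈ range r, (1 - q ^ (2 * (a - t)))⁻¹) := by
  set E := ∑ t ∈ range r, (1 - ((a - t : ℕ) : ℤ)) with hE_def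
  have hE : E * 2 = r * (2 * (1 - a) + (r - 1)) := by
    rw [← one_mul ((r : ℤ) - 1), ← sum_range_affine_mul_two]
    congr 1
    exact sum_congr rfl fun t ht => by simp only [mem_range] at ht; omega
  have hexp : -((c : ℤ) * r) + ((r : ℤ) ^ 2 + 3 * r) / 2 = ((r * (a - c + 1) : ℕ) : ℤ) + E := by
    rw [Int.ediv_eq_of_eq_mul_left two_ne_zero (c := ((r * (a - c + 1) : ℕ) : ℤ) + E + c * r)
      (by push_cast [hca]; linear_combination -hE)]
    ring
  have hP : ∏ t ∈ range r, (1 - q ^ (2 * (a - t))) ≠ 0 :=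
    prod_ne_zero_iff.2 fun t ht => one_sub_q_pow_ne_zero (by simp only [mem_range] at ht; omega)
  rw [Xr, prod_qn_eq q_ne_zero one_sub_q_sq_ne_zero, ← hE_def, hexp, zpow_add₀ q_ne_zero,
    zpow_natCast, prod_inv_distrib, card_range]
  field_simp [q_ne_zero, one_sub_q_sq_ne_zero]

lemma Yr_eq (hra : r ≤ a) (hca : c ≤ a) :
    Yr a c r = q ^ (2 * r * (a - c + 1)) * ((-1) ^ r *
      (∏ t ∈ range r, (1 - q ^ (2 * (2 * t + 1)))) *
      ∏ t ∈ range r, (1 - q ^ (2 * (2 * (a - t))))⁻¹) := by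
  set E₁ := ∑ t ∈ range r, (1 - ((2 * t + 1 : ℕ) : ℤ)) with hE₁_def
  set E₂ := ∑ t ∈ range r, (1 - ((2 * (a - t) : ℕ) : ℤ)) with hE₂_def
  have hE₁ : E₁ * 2 = r * (2 * 0 + -2 * (r - 1)) := by
    rw [← sum_range_affine_mul_two]
    congr 1
    exact sum_congr rfl fun t _ => by push_cast; ring
  have hE₂ : E₂ * 2 = r * (2 * (1 - 2 * a) + 2 * (r - 1)) := by
    rw [← sum_range_affine_mul_two]
    congr 1
    exact sum_congr rfl fun t ht => by simp only [mem_range] at ht; omega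
  have hexp : -(2 * (c : ℤ) * r) + 2 * (r : ℤ) ^ 2 + r =
      ((2 * r * (a - c + 1) : ℕ) : ℤ) + E₂ - E₁ := by
    apply mul_right_cancel₀ (two_ne_zero' ℤ)
    push_cast [hca]
    linear_combination hE₁ - hE₂
  have hP : ∏ t ∈ range r, (1 - q ^ (2 * (2 * (a - t)))) ≠ 0 :=
    prod_ne_zero_iff.2 fun t ht => one_sub_q_pow_ne_zero (by simp only [mem_range] at ht; omega)
  rw [Yr, prod_qn_eq q_ne_zero one_sub_q_sq_ne_zero, prod_qn_eq q_ne_zero one_sub_q_sq_ne_zero,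
    ← hE₁_def, ← hE₂_def, hexp, zpow_sub₀ q_ne_zero, zpow_add₀ q_ne_zero, zpow_natCast,
    prod_inv_distrib]
  field_simp [q_ne_zero, one_sub_q_sq_ne_zero]

end

theorem statement18_general (a c r : ℕ) (h1 : r ≤ c) (h2 : c ≤ a) :
    (∃ f ∈ A0,
      (-1 : K) ^ r * q ^ (-((c : ℤ) * r) + ((r : ℤ) ^ 2 + 3 * r) / 2) *
          (∏ t ∈ Finset.range r, (1 + q ^ (2 * (t + 1)))) /
          ((1 - q ^ 2) ^ r * ∏ t ∈ Finset.range r, qn q (a - t)) =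
        q ^ (r * (a - c + 1)) * f) ∧
    (∃ f ∈ A0,
      (-1 : K) ^ r * q ^ (-(2 * (c : ℤ) * r) + 2 * (r : ℤ) ^ 2 + r) *
          (∏ t ∈ Finset.range r, qn q (2 * t + 1)) /
          (∏ t ∈ Finset.range r, qn q (2 * (a - t))) =
        q ^ (2 * r * (a - c + 1)) * f) := by
  have hra : r ≤ a := h1.trans h2
  have h_neg_one_pow : (-1 : K) ^ r ∈ A0Subring := pow_mem (neg_mem (one_mem _)) r
  refine ⟨⟨_, ?_, Xr_eq hra h2⟩, ⟨_, ?_, Yr_eq hra h2⟩⟩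
  · refine mul_mem (mul_mem h_neg_one_pow (prod_mem fun t _ => one_add_q_pow_mem _))
      (prod_mem fun t ht => inv_one_sub_q_pow_mem ?_)
    simp only [mem_range] at ht
    omega
  · refine mul_mem (mul_mem h_neg_one_pow (prod_mem fun t _ => one_sub_q_pow_mem _))
      (prod_mem fun t ht => inv_one_sub_q_pow_mem ?_)
    simp only [mem_range] at ht
    omega

/-- For integers `a ≥ c ≥ r ≥ 1`, one has
`X_r = (−1)^r q^{−cr+(r²+3r)/2} ((1+q²)⋯(1+q^{2r}))/((1−q²)^r [a]⋯[a−r+1])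
∈ q^{r(a−c+1)} A₀` and
`Y_r = (−1)^r q^{−2cr+2r²+r} ([2r−1][2r−3]⋯[1])/([2a][2a−2]⋯[2a−2r+2])
∈ q^{2r(a−c+1)} A₀`. -/
theorem statement18 (a c r : ℕ) (h1 : r ≤ c) (h2 : c ≤ a) (hr : 1 ≤ r) :
    (∃ f ∈ A0,
      (-1 : K) ^ r * q ^ (-((c : ℤ) * r) + ((r : ℤ) ^ 2 + 3 * r) / 2) *
          (∏ t ∈ Finset.range r, (1 + q ^ (2 * (t + 1)))) /
          ((1 - q ^ 2) ^ r * ∏ t ∈ Finset.range r, qn q (a - t)) =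
        q ^ (r * (a - c + 1)) * f) ∧
    (∃ f ∈ A0,
      (-1 : K) ^ r * q ^ (-(2 * (c : ℤ) * r) + 2 * (r : ℤ) ^ 2 + r) *
          (∏ t ∈ Finset.range r, qn q (2 * t + 1)) /
          (∏ t ∈ Finset.range r, qn q (2 * (a - t))) =
        q ^ (2 * r * (a - c + 1)) * f) :=
  statement18_general a c r h1 h2

end OSP
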